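/- For every C⁴ function u on Ω_r, the first-order-in-time symmetry operator S commutes with the normalized wave operator: [ΔΣ/((r²+a²)Σ + 2Ma²r sin²θ)]·□ₘ(Su) = S([ΔΣ/((r²+a²)Σ + 2Ma²r sin²θ)]·□ₘ u). -/

import Mathlib

noncomputable section

/-- Functions of `(t, r, θ)`. -/
abbrev F3 := ℝ × ℝ × ℝ → ℂ

/-- Partial derivative with respect to `t`. -/
noncomputable def dT (u : F3) (p : ℝ × ℝ × ℝ) : ℂ :=
  deriv (fun s => u (s, p.2.1, p.2.2)) p.1

/-- Partial derivative with respect to `r`. -/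
noncomputable def dR (u : F3) (p : ℝ × ℝ × ℝ) : ℂ :=
  deriv (fun s => u (p.1, s, p.2.2)) p.2.1

/-- Partial derivative with respect to `θ`. -/
noncomputable def dTh (u : F3) (p : ℝ × ℝ × ℝ) : ℂ :=
  deriv (fun s => u (p.1, p.2.1, s)) p.2.2

/-- `Δ = r² - 2Mr + a²`. -/
def Del (M a r : ℝ) : ℝ := r ^ 2 - 2 * M * r + a ^ 2

/-- `Σ = r² + a² cos² θ`. -/
def Sig (a r θ : ℝ) : ℝ := r ^ 2 + a ^ 2 * Real.cos θ ^ 2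

/-- `r₊ = M + √(M² - a²)`. -/
noncomputable def rplus (M a : ℝ) : ℝ := M + Real.sqrt (M ^ 2 - a ^ 2)

/-- `Ω_r = ℝ × (r₊, ∞) × (0, π)`. -/
def OmegaR (M a : ℝ) : Set (ℝ × ℝ × ℝ) :=
  {p | rplus M a < p.2.1 ∧ 0 < p.2.2 ∧ p.2.2 < Real.pi}

/-- The reduced Kerr wave operator `□ₘ`. -/
noncomputable def boxm (M a : ℝ) (m : ℤ) (u : F3) : F3 := fun p =>
  (Complex.ofReal (Sig a p.2.1 p.2.2))⁻¹ *
    (Complex.ofReal ((p.2.1 ^ 2 + a ^ 2) ^ 2 / Del M a p.2.1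
        - a ^ 2 * Real.sin p.2.2 ^ 2) * dT (dT u) p
      + 4 * Complex.I * (m : ℂ) * Complex.ofReal M * Complex.ofReal a
          * Complex.ofReal p.2.1 / Complex.ofReal (Del M a p.2.1) * dT u p
      - dR (fun q => Complex.ofReal (Del M a q.2.1) * dR u q) p
      - (Complex.ofReal (Real.sin p.2.2))⁻¹
          * dTh (fun q => Complex.ofReal (Real.sin q.2.2) * dTh u q) p
      - (m : ℂ) ^ 2 * Complex.ofReal (a ^ 2 / Del M a p.2.1
          - (Real.sin p.2.2 ^ 2)⁻¹) * u p)

/-- The Killing-tensor operator `□̄ₘ`. -/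
noncomputable def barboxm (M a : ℝ) (m : ℤ) (u : F3) : F3 := fun p =>
  (Complex.ofReal (Sig a p.2.1 p.2.2))⁻¹ *
    (Complex.ofReal (a ^ 2 * (p.2.1 ^ 2 * Real.sin p.2.2 ^ 2
        + Real.cos p.2.2 ^ 2 * (p.2.1 ^ 2 + a ^ 2) ^ 2 / Del M a p.2.1)) * dT (dT u) p
      + 2 * Complex.I * (m : ℂ) * Complex.ofReal a
          * Complex.ofReal (p.2.1 ^ 2 + a ^ 2 * Real.cos p.2.2 ^ 2
              * (p.2.1 ^ 2 + a ^ 2) / Del M a p.2.1) * dT u p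
      - Complex.ofReal (a ^ 2 * Real.cos p.2.2 ^ 2)
          * dR (fun q => Complex.ofReal (Del M a q.2.1) * dR u q) p
      + Complex.ofReal (p.2.1 ^ 2 / Real.sin p.2.2)
          * dTh (fun q => Complex.ofReal (Real.sin q.2.2) * dTh u q) p
      - (m : ℂ) ^ 2 * Complex.ofReal (p.2.1 ^ 2 / Real.sin p.2.2 ^ 2
          + a ^ 4 * Real.cos p.2.2 ^ 2 / Del M a p.2.1) * u p)

/-- The ladder operator `Dₙ`. -/
noncomputable def Dlad (M a : ℝ) (m n : ℤ) (u : F3) : F3 := fun p =>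
  dR u p + (Complex.ofReal (Del M a p.2.1))⁻¹ *
      (Complex.ofReal (p.2.1 ^ 2 + a ^ 2) * dT u p
        + Complex.I * (m : ℂ) * Complex.ofReal a * u p)
    + Complex.ofReal (2 * (n : ℝ) * (p.2.1 - M) / Del M a p.2.1) * u p

/-- The ladder operator `Dₙ⁺`. -/
noncomputable def DladP (M a : ℝ) (m n : ℤ) (u : F3) : F3 := fun p =>
  dR u p - (Complex.ofReal (Del M a p.2.1))⁻¹ *
      (Complex.ofReal (p.2.1 ^ 2 + a ^ 2) * dT u p
        + Complex.I * (m : ℂ) * Complex.ofReal a * u p)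
    + Complex.ofReal (2 * (n : ℝ) * (p.2.1 - M) / Del M a p.2.1) * u p

/-- The ladder operator `Lₙ`. -/
noncomputable def Llad (a : ℝ) (m n : ℤ) (u : F3) : F3 := fun p =>
  dTh u p + (-Complex.I * Complex.ofReal a * Complex.ofReal (Real.sin p.2.2) * dT u p
      + (m : ℂ) * (Complex.ofReal (Real.sin p.2.2))⁻¹ * u p)
    + (n : ℂ) * Complex.ofReal (Real.cos p.2.2 / Real.sin p.2.2) * u p

/-- The ladder operator `Lₙ⁺`. -/
noncomputable def LladP (a : ℝ) (m n : ℤ) (u : F3) : F3 := fun p =>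
  dTh u p - (-Complex.I * Complex.ofReal a * Complex.ofReal (Real.sin p.2.2) * dT u p
      + (m : ℂ) * (Complex.ofReal (Real.sin p.2.2))⁻¹ * u p)
    + (n : ℂ) * Complex.ofReal (Real.cos p.2.2 / Real.sin p.2.2) * u p

/-- `D² = D₁D₀⁺ + D₁⁺D₀`. -/
noncomputable def D2 (M a : ℝ) (m : ℤ) (u : F3) : F3 := fun p =>
  Dlad M a m 1 (DladP M a m 0 u) p + DladP M a m 1 (Dlad M a m 0 u) p

/-- `L² = L₁L₀⁺ + L₁⁺L₀`. -/
noncomputable def L2 (a : ℝ) (m : ℤ) (u : F3) : F3 := fun p =>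
  Llad a m 1 (LladP a m 0 u) p + LladP a m 1 (Llad a m 0 u) p

/-- The operator `P` appearing in the symmetry operator `S`. -/
noncomputable def Pop (M a : ℝ) (m : ℤ) (u : F3) : F3 := fun p =>
  -2 * Complex.I * (m : ℂ) * Complex.ofReal a
      * Complex.ofReal ((p.2.1 ^ 2 + a ^ 2) * Sig a p.2.1 p.2.2) * dT u p
    - Complex.ofReal (a ^ 2 * Real.sin p.2.2 ^ 2 * Del M a p.2.1)
        * dR (fun q => Complex.ofReal (Del M a q.2.1) * dR u q) p
    - Complex.ofReal ((p.2.1 ^ 2 + a ^ 2) ^ 2 / Real.sin p.2.2)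
        * dTh (fun q => Complex.ofReal (Real.sin q.2.2) * dTh u q) p
    + (m : ℂ) ^ 2 * Complex.ofReal (Sig a p.2.1 p.2.2 / Real.sin p.2.2 ^ 2
        * (Sig a p.2.1 p.2.2 + 2 * a ^ 2 * Real.sin p.2.2 ^ 2)) * u p

/-- The new first-order-in-time symmetry operator `S`. -/
noncomputable def Sop (M a : ℝ) (m : ℤ) (u : F3) : F3 := fun p =>
  (Complex.ofReal ((p.2.1 ^ 2 + a ^ 2) * Sig a p.2.1 p.2.2
      + 2 * M * a ^ 2 * p.2.1 * Real.sin p.2.2 ^ 2))⁻¹ * Pop M a m u p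

end

/-- The normalized wave operator `[ΔΣ/((r²+a²)Σ + 2Ma²r sin²θ)] □ₘ`. -/
noncomputable def Nbox (M a : ℝ) (m : ℤ) (u : F3) : F3 := fun p =>
  Complex.ofReal (Del M a p.2.1 * Sig a p.2.1 p.2.2 /
      ((p.2.1 ^ 2 + a ^ 2) * Sig a p.2.1 p.2.2 + 2 * M * a ^ 2 * p.2.1 * Real.sin p.2.2 ^ 2)) *
    boxm M a m u p

/-! ### Auxiliary infrastructure for the commutation proof -/

section KerrCommAux

open Complex Set

/-- The weight `W = (r²+a²)Σ + 2Ma²r sin²θ`. -/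
noncomputable def Wf (M a : ℝ) (p : ℝ × ℝ × ℝ) : ℝ :=
  (p.2.1 ^ 2 + a ^ 2) * Sig a p.2.1 p.2.2 + 2 * M * a ^ 2 * p.2.1 * Real.sin p.2.2 ^ 2

/-- Directional derivative via `fderiv`. -/
noncomputable def pdv (v : ℝ × ℝ × ℝ) (f : F3) : F3 := fun p => fderiv ℝ f p v

lemma hasDerivAt_secT (p : ℝ × ℝ × ℝ) :
    HasDerivAt (fun s : ℝ => (s, p.2.1, p.2.2)) ((1:ℝ),(0:ℝ),(0:ℝ)) p.1 := by
  simpa [Prod.mk_zero_zero] using (hasDerivAt_id p.1).prodMk (hasDerivAt_const p.1 (p.2.1, p.2.2))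

lemma hasDerivAt_secR (p : ℝ × ℝ × ℝ) :
    HasDerivAt (fun s : ℝ => (p.1, s, p.2.2)) ((0:ℝ),(1:ℝ),(0:ℝ)) p.2.1 :=
  (hasDerivAt_const p.2.1 p.1).prodMk ((hasDerivAt_id p.2.1).prodMk (hasDerivAt_const p.2.1 p.2.2))

lemma hasDerivAt_secTh (p : ℝ × ℝ × ℝ) :
    HasDerivAt (fun s : ℝ => (p.1, p.2.1, s)) ((0:ℝ),(0:ℝ),(1:ℝ)) p.2.2 :=
  (hasDerivAt_const p.2.2 p.1).prodMk ((hasDerivAt_const p.2.2 p.2.1).prodMk (hasDerivAt_id p.2.2))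

lemma dT_eq_pdv {f : F3} {p} (hf : DifferentiableAt ℝ f p) : dT f p = pdv (1,0,0) f p :=
  (hf.hasFDerivAt.comp_hasDerivAt p.1 (hasDerivAt_secT p)).deriv

lemma dR_eq_pdv {f : F3} {p} (hf : DifferentiableAt ℝ f p) : dR f p = pdv (0,1,0) f p :=
  (hf.hasFDerivAt.comp_hasDerivAt p.2.1 (hasDerivAt_secR p)).deriv

lemma dTh_eq_pdv {f : F3} {p} (hf : DifferentiableAt ℝ f p) : dTh f p = pdv (0,0,1) f p :=
  (hf.hasFDerivAt.comp_hasDerivAt p.2.2 (hasDerivAt_secTh p)).deriv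

lemma dT_congr {f g : F3} {p} (h : f =ᶠ[nhds p] g) : dT f p = dT g p := by
  apply Filter.EventuallyEq.deriv_eq
  have hc : ContinuousAt (fun s : ℝ => (s, p.2.1, p.2.2)) p.1 := by fun_prop
  exact h.comp_tendsto hc

lemma dR_congr {f g : F3} {p} (h : f =ᶠ[nhds p] g) : dR f p = dR g p := by
  apply Filter.EventuallyEq.deriv_eq
  have hc : ContinuousAt (fun s : ℝ => (p.1, s, p.2.2)) p.2.1 := by fun_prop
  exact h.comp_tendsto hc

lemma dTh_congr {f g : F3} {p} (h : f =ᶠ[nhds p] g) : dTh f p = dTh g p := by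
  apply Filter.EventuallyEq.deriv_eq
  have hc : ContinuousAt (fun s : ℝ => (p.1, p.2.1, s)) p.2.2 := by fun_prop
  exact h.comp_tendsto hc

variable {Ω : Set (ℝ × ℝ × ℝ)}

lemma dT_congrOn {f g : F3} (hΩ : IsOpen Ω) (h : Set.EqOn f g Ω) {p} (hp : p ∈ Ω) :
    dT f p = dT g p := dT_congr (Filter.eventuallyEq_of_mem (hΩ.mem_nhds hp) h)

lemma dR_congrOn {f g : F3} (hΩ : IsOpen Ω) (h : Set.EqOn f g Ω) {p} (hp : p ∈ Ω) :
    dR f p = dR g p := dR_congr (Filter.eventuallyEq_of_mem (hΩ.mem_nhds hp) h)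

lemma dTh_congrOn {f g : F3} (hΩ : IsOpen Ω) (h : Set.EqOn f g Ω) {p} (hp : p ∈ Ω) :
    dTh f p = dTh g p := dTh_congr (Filter.eventuallyEq_of_mem (hΩ.mem_nhds hp) h)

lemma diffAt_of_cd {n : WithTop ℕ∞} {f : F3} (hΩ : IsOpen Ω) (hf : ContDiffOn ℝ n f Ω)
    (hn : 1 ≤ n) {p} (hp : p ∈ Ω) : DifferentiableAt ℝ f p :=
  (hf.contDiffAt (hΩ.mem_nhds hp)).differentiableAt (lt_of_lt_of_le zero_lt_one hn).ne'

lemma contDiffOn_pdv {m n : WithTop ℕ∞} {f : F3} (hΩ : IsOpen Ω)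
    (hf : ContDiffOn ℝ n f Ω) (hmn : m + 1 ≤ n) (v : ℝ × ℝ × ℝ) :
    ContDiffOn ℝ m (pdv v f) Ω := by
  have h1 : ContDiffOn ℝ m (fderiv ℝ f) Ω := hf.fderiv_of_isOpen hΩ hmn
  exact (ContinuousLinearMap.apply ℝ ℂ v).contDiff.comp_contDiffOn h1

lemma pdv_comm {f : F3} (hΩ : IsOpen Ω) (hf : ContDiffOn ℝ 2 f Ω) {p} (hp : p ∈ Ω)
    (v w : ℝ × ℝ × ℝ) : pdv v (pdv w f) p = pdv w (pdv v f) p := by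
  have hsym := (hf.contDiffAt (hΩ.mem_nhds hp)).isSymmSndFDerivAt (by simp)
  have hd : DifferentiableAt ℝ (fderiv ℝ f) p := by
    have h2 : ContDiffOn ℝ 1 (fderiv ℝ f) Ω := hf.fderiv_of_isOpen hΩ (by norm_num)
    exact (h2.contDiffAt (hΩ.mem_nhds hp)).differentiableAt one_ne_zero
  have key : ∀ x y : ℝ × ℝ × ℝ, pdv x (pdv y f) p = fderiv ℝ (fderiv ℝ f) p x y := by
    intro x y
    have hc := ((ContinuousLinearMap.apply ℝ ℂ y).hasFDerivAt.comp p hd.hasFDerivAt).fderiv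
    calc pdv x (pdv y f) p = fderiv ℝ (pdv y f) p x := rfl
      _ = fderiv ℝ (fderiv ℝ f) p x y := by
          rw [show pdv y f = (ContinuousLinearMap.apply ℝ ℂ y) ∘ (fderiv ℝ f) from rfl, hc]; rfl
  rw [key, key, hsym v w]

lemma eqOn_dT_pdv {f : F3} (hΩ : IsOpen Ω) {n : WithTop ℕ∞} (hf : ContDiffOn ℝ n f Ω)
    (hn : 1 ≤ n) : Set.EqOn (dT f) (pdv (1,0,0) f) Ω :=
  fun _ hq => dT_eq_pdv (diffAt_of_cd hΩ hf hn hq)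

lemma eqOn_dR_pdv {f : F3} (hΩ : IsOpen Ω) {n : WithTop ℕ∞} (hf : ContDiffOn ℝ n f Ω)
    (hn : 1 ≤ n) : Set.EqOn (dR f) (pdv (0,1,0) f) Ω :=
  fun _ hq => dR_eq_pdv (diffAt_of_cd hΩ hf hn hq)

lemma eqOn_dTh_pdv {f : F3} (hΩ : IsOpen Ω) {n : WithTop ℕ∞} (hf : ContDiffOn ℝ n f Ω)
    (hn : 1 ≤ n) : Set.EqOn (dTh f) (pdv (0,0,1) f) Ω :=
  fun _ hq => dTh_eq_pdv (diffAt_of_cd hΩ hf hn hq)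

lemma cd_dT {n : WithTop ℕ∞} {f : F3} (hΩ : IsOpen Ω) {k : WithTop ℕ∞}
    (hf : ContDiffOn ℝ n f Ω) (hk : k + 1 ≤ n) : ContDiffOn ℝ k (dT f) Ω :=
  (contDiffOn_pdv hΩ hf hk _).congr
    (eqOn_dT_pdv hΩ hf (le_trans (le_add_self) hk))

lemma cd_dR {n : WithTop ℕ∞} {f : F3} (hΩ : IsOpen Ω) {k : WithTop ℕ∞}
    (hf : ContDiffOn ℝ n f Ω) (hk : k + 1 ≤ n) : ContDiffOn ℝ k (dR f) Ω :=
  (contDiffOn_pdv hΩ hf hk _).congr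
    (eqOn_dR_pdv hΩ hf (le_trans (le_add_self) hk))

lemma cd_dTh {n : WithTop ℕ∞} {f : F3} (hΩ : IsOpen Ω) {k : WithTop ℕ∞}
    (hf : ContDiffOn ℝ n f Ω) (hk : k + 1 ≤ n) : ContDiffOn ℝ k (dTh f) Ω :=
  (contDiffOn_pdv hΩ hf hk _).congr
    (eqOn_dTh_pdv hΩ hf (le_trans (le_add_self) hk))

-- swap lemmas (Clairaut)
lemma swapTR {f : F3} (hΩ : IsOpen Ω) (hf : ContDiffOn ℝ 2 f Ω) {p} (hp : p ∈ Ω) :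
    dT (dR f) p = dR (dT f) p := by
  have h1 : ContDiffOn ℝ 1 (pdv (0,1,0) f) Ω := contDiffOn_pdv hΩ hf (by norm_num) _
  have h2 : ContDiffOn ℝ 1 (pdv (1,0,0) f) Ω := contDiffOn_pdv hΩ hf (by norm_num) _
  calc dT (dR f) p = dT (pdv (0,1,0) f) p :=
        dT_congrOn hΩ (eqOn_dR_pdv hΩ hf (by norm_num)) hp
    _ = pdv (1,0,0) (pdv (0,1,0) f) p := dT_eq_pdv (diffAt_of_cd hΩ h1 le_rfl hp)
    _ = pdv (0,1,0) (pdv (1,0,0) f) p := pdv_comm hΩ hf hp _ _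
    _ = dR (pdv (1,0,0) f) p := (dR_eq_pdv (diffAt_of_cd hΩ h2 le_rfl hp)).symm
    _ = dR (dT f) p := (dR_congrOn hΩ (eqOn_dT_pdv hΩ hf (by norm_num)) hp).symm

lemma swapTTh {f : F3} (hΩ : IsOpen Ω) (hf : ContDiffOn ℝ 2 f Ω) {p} (hp : p ∈ Ω) :
    dT (dTh f) p = dTh (dT f) p := by
  have h1 : ContDiffOn ℝ 1 (pdv (0,0,1) f) Ω := contDiffOn_pdv hΩ hf (by norm_num) _
  have h2 : ContDiffOn ℝ 1 (pdv (1,0,0) f) Ω := contDiffOn_pdv hΩ hf (by norm_num) _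
  calc dT (dTh f) p = dT (pdv (0,0,1) f) p :=
        dT_congrOn hΩ (eqOn_dTh_pdv hΩ hf (by norm_num)) hp
    _ = pdv (1,0,0) (pdv (0,0,1) f) p := dT_eq_pdv (diffAt_of_cd hΩ h1 le_rfl hp)
    _ = pdv (0,0,1) (pdv (1,0,0) f) p := pdv_comm hΩ hf hp _ _
    _ = dTh (pdv (1,0,0) f) p := (dTh_eq_pdv (diffAt_of_cd hΩ h2 le_rfl hp)).symm
    _ = dTh (dT f) p := (dTh_congrOn hΩ (eqOn_dT_pdv hΩ hf (by norm_num)) hp).symm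

lemma swapRTh {f : F3} (hΩ : IsOpen Ω) (hf : ContDiffOn ℝ 2 f Ω) {p} (hp : p ∈ Ω) :
    dR (dTh f) p = dTh (dR f) p := by
  have h1 : ContDiffOn ℝ 1 (pdv (0,0,1) f) Ω := contDiffOn_pdv hΩ hf (by norm_num) _
  have h2 : ContDiffOn ℝ 1 (pdv (0,1,0) f) Ω := contDiffOn_pdv hΩ hf (by norm_num) _
  calc dR (dTh f) p = dR (pdv (0,0,1) f) p :=
        dR_congrOn hΩ (eqOn_dTh_pdv hΩ hf (by norm_num)) hp
    _ = pdv (0,1,0) (pdv (0,0,1) f) p := dR_eq_pdv (diffAt_of_cd hΩ h1 le_rfl hp)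
    _ = pdv (0,0,1) (pdv (0,1,0) f) p := pdv_comm hΩ hf hp _ _
    _ = dTh (pdv (0,1,0) f) p := (dTh_eq_pdv (diffAt_of_cd hΩ h2 le_rfl hp)).symm
    _ = dTh (dR f) p := (dTh_congrOn hΩ (eqOn_dR_pdv hΩ hf (by norm_num)) hp).symm

-- linearity
lemma dT_add {f g : F3} {p} (hf : DifferentiableAt ℝ f p) (hg : DifferentiableAt ℝ g p) :
    dT (fun q => f q + g q) p = dT f p + dT g p := by
  rw [dT_eq_pdv (hf.fun_add hg), dT_eq_pdv hf, dT_eq_pdv hg]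
  simp [pdv, fderiv_fun_add hf hg]

lemma dR_add {f g : F3} {p} (hf : DifferentiableAt ℝ f p) (hg : DifferentiableAt ℝ g p) :
    dR (fun q => f q + g q) p = dR f p + dR g p := by
  rw [dR_eq_pdv (hf.fun_add hg), dR_eq_pdv hf, dR_eq_pdv hg]
  simp [pdv, fderiv_fun_add hf hg]

lemma dTh_add {f g : F3} {p} (hf : DifferentiableAt ℝ f p) (hg : DifferentiableAt ℝ g p) :
    dTh (fun q => f q + g q) p = dTh f p + dTh g p := by
  rw [dTh_eq_pdv (hf.fun_add hg), dTh_eq_pdv hf, dTh_eq_pdv hg]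
  simp [pdv, fderiv_fun_add hf hg]

-- multiplier pass-through (unconditional)
lemma dT_mul (g : ℝ × ℝ → ℂ) (f : F3) (p : ℝ × ℝ × ℝ) :
    dT (fun q => g q.2 * f q) p = g p.2 * dT f p := by
  show deriv (fun s => g p.2 * f (s, p.2.1, p.2.2)) p.1 = _
  exact deriv_const_mul_field _

lemma dR_mul (g : ℝ → ℝ → ℂ) (f : F3) (p : ℝ × ℝ × ℝ) :
    dR (fun q => g q.1 q.2.2 * f q) p = g p.1 p.2.2 * dR f p := by
  show deriv (fun s => g p.1 p.2.2 * f (p.1, s, p.2.2)) p.2.1 = _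
  exact deriv_const_mul_field _

lemma dTh_mul (g : ℝ → ℝ → ℂ) (f : F3) (p : ℝ × ℝ × ℝ) :
    dTh (fun q => g q.1 q.2.1 * f q) p = g p.1 p.2.1 * dTh f p := by
  show deriv (fun s => g p.1 p.2.1 * f (p.1, p.2.1, s)) p.2.2 = _
  exact deriv_const_mul_field _

end KerrCommAux
section KerrCommOps

open Complex Set

variable {Ω : Set (ℝ × ℝ × ℝ)}

/-- Radial second-order core `A v = ∂ᵣ(Δ ∂ᵣ v)`. -/
noncomputable def Aop (M a : ℝ) (v : F3) : F3 := fun p =>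
  dR (fun q => Complex.ofReal (Del M a q.2.1) * dR v q) p

/-- Angular second-order core `B v = ∂θ(sin θ ∂θ v)`. -/
noncomputable def Bop (v : F3) : F3 := fun p =>
  dTh (fun q => Complex.ofReal (Real.sin q.2.2) * dTh v q) p

/-- The radial operator `P`. -/
noncomputable def Pc (M a : ℝ) (m : ℤ) (v : F3) : F3 := fun p =>
  -Aop M a v p
  + Complex.ofReal ((p.2.1 ^ 2 + a ^ 2) ^ 2 / Del M a p.2.1) * dT (dT v) p
  + 2 * Complex.I * (m : ℂ) * (a : ℂ) * Complex.ofReal (p.2.1 ^ 2 + a ^ 2)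
      / Complex.ofReal (Del M a p.2.1) * dT v p
  - (m : ℂ) ^ 2 * Complex.ofReal (a ^ 2 / Del M a p.2.1) * v p

/-- The angular operator `Q`. -/
noncomputable def Qc (a : ℝ) (m : ℤ) (v : F3) : F3 := fun p =>
  -((Complex.ofReal (Real.sin p.2.2))⁻¹ * Bop v p)
  - Complex.ofReal (a ^ 2 * Real.sin p.2.2 ^ 2) * dT (dT v) p
  - 2 * Complex.I * (a : ℂ) * (m : ℂ) * dT v p
  + (m : ℂ) ^ 2 * (Complex.ofReal (Real.sin p.2.2 ^ 2))⁻¹ * v p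

-- unconditional pass-throughs
lemma Aop_smulTh (M a : ℝ) (g : ℝ → ℂ) (f : F3) (p : ℝ × ℝ × ℝ) :
    Aop M a (fun q => g q.2.2 * f q) p = g p.2.2 * Aop M a f p := by
  have h1 : (fun q : ℝ×ℝ×ℝ => Complex.ofReal (Del M a q.2.1) * dR (fun q' => g q'.2.2 * f q') q)
      = (fun q => g q.2.2 * (Complex.ofReal (Del M a q.2.1) * dR f q)) := by
    funext q
    rw [dR_mul (fun _ x => g x) f q]
    ring
  show dR _ p = _
  rw [h1, dR_mul (fun _ x => g x) _ p]
  rfl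

lemma Bop_smulR (g : ℝ → ℂ) (f : F3) (p : ℝ × ℝ × ℝ) :
    Bop (fun q => g q.2.1 * f q) p = g p.2.1 * Bop f p := by
  have h1 : (fun q : ℝ×ℝ×ℝ => Complex.ofReal (Real.sin q.2.2) * dTh (fun q' => g q'.2.1 * f q') q)
      = (fun q => g q.2.1 * (Complex.ofReal (Real.sin q.2.2) * dTh f q)) := by
    funext q
    rw [dTh_mul (fun _ x => g x) f q]
    ring
  show dTh _ p = _
  rw [h1, dTh_mul (fun _ x => g x) _ p]
  rfl

-- congruence
lemma Aop_congr (M a : ℝ) {f g : F3} (hΩ : IsOpen Ω) (h : Set.EqOn f g Ω) {p} (hp : p ∈ Ω) :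
    Aop M a f p = Aop M a g p := by
  apply dR_congrOn hΩ ?_ hp
  intro q hq
  simp only []
  rw [dR_congrOn hΩ h hq]

lemma Bop_congr {f g : F3} (hΩ : IsOpen Ω) (h : Set.EqOn f g Ω) {p} (hp : p ∈ Ω) :
    Bop f p = Bop g p := by
  apply dTh_congrOn hΩ ?_ hp
  intro q hq
  simp only []
  rw [dTh_congrOn hΩ h hq]

-- smoothness of coefficient builders
lemma cd_ofReal {n : WithTop ℕ∞} {f : ℝ × ℝ × ℝ → ℝ} {s : Set (ℝ×ℝ×ℝ)}
    (h : ContDiffOn ℝ n f s) : ContDiffOn ℝ n (fun q => Complex.ofReal (f q)) s :=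
  Complex.ofRealCLM.contDiff.comp_contDiffOn h

lemma cd_r {n : WithTop ℕ∞} : ContDiff ℝ n (fun q : ℝ×ℝ×ℝ => q.2.1) :=
  contDiff_fst.comp contDiff_snd

lemma cd_th {n : WithTop ℕ∞} : ContDiff ℝ n (fun q : ℝ×ℝ×ℝ => q.2.2) :=
  contDiff_snd.comp contDiff_snd

lemma cd_DelC (M a : ℝ) {n : WithTop ℕ∞} :
    ContDiff ℝ n (fun q : ℝ×ℝ×ℝ => Complex.ofReal (Del M a q.2.1)) := by
  have : ContDiff ℝ n (fun q : ℝ×ℝ×ℝ => Del M a q.2.1) := by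
    unfold Del
    exact ((cd_r.pow 2).sub (contDiff_const.mul cd_r)).add contDiff_const
  exact Complex.ofRealCLM.contDiff.comp this

lemma cd_sinC {n : WithTop ℕ∞} :
    ContDiff ℝ n (fun q : ℝ×ℝ×ℝ => Complex.ofReal (Real.sin q.2.2)) :=
  Complex.ofRealCLM.contDiff.comp (Real.contDiff_sin.comp cd_th)

lemma cd_Aop {n k : WithTop ℕ∞} {f : F3} (M a : ℝ) (hΩ : IsOpen Ω)
    (hf : ContDiffOn ℝ n f Ω) (hk : k + 2 ≤ n) : ContDiffOn ℝ k (Aop M a f) Ω := by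
  have h1 : ContDiffOn ℝ (k+1) (dR f) Ω := cd_dR hΩ hf (by rwa [add_assoc, one_add_one_eq_two])
  have h2 : ContDiffOn ℝ (k+1) (fun q => Complex.ofReal (Del M a q.2.1) * dR f q) Ω :=
    (cd_DelC M a).contDiffOn.mul h1
  exact cd_dR hΩ h2 le_rfl

lemma cd_Bop {n k : WithTop ℕ∞} {f : F3} (hΩ : IsOpen Ω)
    (hf : ContDiffOn ℝ n f Ω) (hk : k + 2 ≤ n) : ContDiffOn ℝ k (Bop f) Ω := by
  have h1 : ContDiffOn ℝ (k+1) (dTh f) Ω := cd_dTh hΩ hf (by rwa [add_assoc, one_add_one_eq_two])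
  have h2 : ContDiffOn ℝ (k+1) (fun q => Complex.ofReal (Real.sin q.2.2) * dTh f q) Ω :=
    cd_sinC.contDiffOn.mul h1
  exact cd_dTh hΩ h2 le_rfl

end KerrCommOps
section KerrCommCores

open Complex Set

variable {Ω : Set (ℝ × ℝ × ℝ)}

/-- `∂ₜ` commutes with `A`. -/
lemma L_AT (M a : ℝ) {f : F3} (hΩ : IsOpen Ω) (hf : ContDiffOn ℝ 3 f Ω) {p} (hp : p ∈ Ω) :
    dT (Aop M a f) p = Aop M a (dT f) p := by
  have hf2 : ContDiffOn ℝ 2 f Ω := hf.of_le (by norm_num)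
  have hmd : ContDiffOn ℝ 2 (fun q => Complex.ofReal (Del M a q.2.1) * dR f q) Ω :=
    (cd_DelC M a).contDiffOn.mul (cd_dR hΩ hf (by norm_num))
  have h2 : dT (fun q => Complex.ofReal (Del M a q.2.1) * dR f q)
      = fun q => Complex.ofReal (Del M a q.2.1) * dT (dR f) q := by
    funext q
    exact dT_mul (fun x => Complex.ofReal (Del M a x.1)) (dR f) q
  have h3 : Set.EqOn (fun q => Complex.ofReal (Del M a q.2.1) * dT (dR f) q)
      (fun q => Complex.ofReal (Del M a q.2.1) * dR (dT f) q) Ω := by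
    intro q hq
    simp only []
    rw [swapTR hΩ hf2 hq]
  calc dT (Aop M a f) p
      = dT (dR (fun q => Complex.ofReal (Del M a q.2.1) * dR f q)) p := rfl
    _ = dR (dT (fun q => Complex.ofReal (Del M a q.2.1) * dR f q)) p := swapTR hΩ hmd hp
    _ = dR (fun q => Complex.ofReal (Del M a q.2.1) * dT (dR f) q) p := by rw [h2]
    _ = dR (fun q => Complex.ofReal (Del M a q.2.1) * dR (dT f) q) p := dR_congrOn hΩ h3 hp
    _ = Aop M a (dT f) p := rfl

/-- `∂ₜ` commutes with `B`. -/
lemma L_TB {f : F3} (hΩ : IsOpen Ω) (hf : ContDiffOn ℝ 3 f Ω) {p} (hp : p ∈ Ω) :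
    dT (Bop f) p = Bop (dT f) p := by
  have hf2 : ContDiffOn ℝ 2 f Ω := hf.of_le (by norm_num)
  have hmd : ContDiffOn ℝ 2 (fun q => Complex.ofReal (Real.sin q.2.2) * dTh f q) Ω :=
    cd_sinC.contDiffOn.mul (cd_dTh hΩ hf (by norm_num))
  have h2 : dT (fun q => Complex.ofReal (Real.sin q.2.2) * dTh f q)
      = fun q => Complex.ofReal (Real.sin q.2.2) * dT (dTh f) q := by
    funext q
    exact dT_mul (fun x => Complex.ofReal (Real.sin x.2)) (dTh f) q
  have h3 : Set.EqOn (fun q => Complex.ofReal (Real.sin q.2.2) * dT (dTh f) q)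
      (fun q => Complex.ofReal (Real.sin q.2.2) * dTh (dT f) q) Ω := by
    intro q hq
    simp only []
    rw [swapTTh hΩ hf2 hq]
  calc dT (Bop f) p
      = dT (dTh (fun q => Complex.ofReal (Real.sin q.2.2) * dTh f q)) p := rfl
    _ = dTh (dT (fun q => Complex.ofReal (Real.sin q.2.2) * dTh f q)) p := swapTTh hΩ hmd hp
    _ = dTh (fun q => Complex.ofReal (Real.sin q.2.2) * dT (dTh f) q) p := by rw [h2]
    _ = dTh (fun q => Complex.ofReal (Real.sin q.2.2) * dTh (dT f) q) p := dTh_congrOn hΩ h3 hp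
    _ = Bop (dT f) p := rfl

/-- `∂ᵣ` commutes with `B`. -/
lemma L_RB {f : F3} (hΩ : IsOpen Ω) (hf : ContDiffOn ℝ 3 f Ω) {p} (hp : p ∈ Ω) :
    dR (Bop f) p = Bop (dR f) p := by
  have hf2 : ContDiffOn ℝ 2 f Ω := hf.of_le (by norm_num)
  have hmd : ContDiffOn ℝ 2 (fun q => Complex.ofReal (Real.sin q.2.2) * dTh f q) Ω :=
    cd_sinC.contDiffOn.mul (cd_dTh hΩ hf (by norm_num))
  have h2 : dR (fun q => Complex.ofReal (Real.sin q.2.2) * dTh f q)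
      = fun q => Complex.ofReal (Real.sin q.2.2) * dR (dTh f) q := by
    funext q
    exact dR_mul (fun _ x => Complex.ofReal (Real.sin x)) (dTh f) q
  have h3 : Set.EqOn (fun q => Complex.ofReal (Real.sin q.2.2) * dR (dTh f) q)
      (fun q => Complex.ofReal (Real.sin q.2.2) * dTh (dR f) q) Ω := by
    intro q hq
    simp only []
    rw [swapRTh hΩ hf2 hq]
  calc dR (Bop f) p
      = dR (dTh (fun q => Complex.ofReal (Real.sin q.2.2) * dTh f q)) p := rfl
    _ = dTh (dR (fun q => Complex.ofReal (Real.sin q.2.2) * dTh f q)) p := swapRTh hΩ hmd hp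
    _ = dTh (fun q => Complex.ofReal (Real.sin q.2.2) * dR (dTh f) q) p := by rw [h2]
    _ = dTh (fun q => Complex.ofReal (Real.sin q.2.2) * dTh (dR f) q) p := dTh_congrOn hΩ h3 hp
    _ = Bop (dR f) p := rfl

/-- `A` commutes with `B`. -/
lemma L_AB (M a : ℝ) {f : F3} (hΩ : IsOpen Ω) (hf : ContDiffOn ℝ 4 f Ω) {p} (hp : p ∈ Ω) :
    Aop M a (Bop f) p = Bop (Aop M a f) p := by
  have hf3 : ContDiffOn ℝ 3 f Ω := hf.of_le (by norm_num)
  have hmd3 : ContDiffOn ℝ 3 (fun q => Complex.ofReal (Del M a q.2.1) * dR f q) Ω :=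
    (cd_DelC M a).contDiffOn.mul (cd_dR hΩ hf (by norm_num))
  have h1 : Set.EqOn (fun q => Complex.ofReal (Del M a q.2.1) * dR (Bop f) q)
      (fun q => Bop (fun q' => Complex.ofReal (Del M a q'.2.1) * dR f q') q) Ω := by
    intro q hq
    simp only []
    rw [L_RB hΩ hf3 hq, ← Bop_smulR (fun x => Complex.ofReal (Del M a x)) (dR f) q]
  calc Aop M a (Bop f) p
      = dR (fun q => Complex.ofReal (Del M a q.2.1) * dR (Bop f) q) p := rfl
    _ = dR (fun q => Bop (fun q' => Complex.ofReal (Del M a q'.2.1) * dR f q') q) p :=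
        dR_congrOn hΩ h1 hp
    _ = dR (Bop (fun q' => Complex.ofReal (Del M a q'.2.1) * dR f q')) p := rfl
    _ = Bop (dR (fun q' => Complex.ofReal (Del M a q'.2.1) * dR f q')) p := L_RB hΩ hmd3 hp
    _ = Bop (Aop M a f) p := rfl

end KerrCommCores
section KerrCommAdd

open Complex Set

variable {Ω : Set (ℝ × ℝ × ℝ)}

lemma dT_add4 {f1 f2 f3 f4 : F3} {p}
    (h1 : DifferentiableAt ℝ f1 p) (h2 : DifferentiableAt ℝ f2 p)
    (h3 : DifferentiableAt ℝ f3 p) (h4 : DifferentiableAt ℝ f4 p) :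
    dT (fun q => f1 q + (f2 q + (f3 q + f4 q))) p
      = dT f1 p + (dT f2 p + (dT f3 p + dT f4 p)) := by
  rw [dT_add h1 (h2.fun_add (h3.fun_add h4)), dT_add h2 (h3.fun_add h4), dT_add h3 h4]

lemma Aop_add (M a : ℝ) {f g : F3} (hΩ : IsOpen Ω)
    (hf : ContDiffOn ℝ 2 f Ω) (hg : ContDiffOn ℝ 2 g Ω) {p} (hp : p ∈ Ω) :
    Aop M a (fun q => f q + g q) p = Aop M a f p + Aop M a g p := by
  have h1 : Set.EqOn (fun q => Complex.ofReal (Del M a q.2.1) * dR (fun q' => f q' + g q') q)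
      (fun q => Complex.ofReal (Del M a q.2.1) * dR f q
        + Complex.ofReal (Del M a q.2.1) * dR g q) Ω := by
    intro q hq
    simp only []
    rw [dR_add (diffAt_of_cd hΩ hf (by norm_num) hq) (diffAt_of_cd hΩ hg (by norm_num) hq)]
    ring
  have hdf : ContDiffOn ℝ 1 (fun q => Complex.ofReal (Del M a q.2.1) * dR f q) Ω :=
    (cd_DelC M a).contDiffOn.mul (cd_dR hΩ hf (by norm_num))
  have hdg : ContDiffOn ℝ 1 (fun q => Complex.ofReal (Del M a q.2.1) * dR g q) Ω :=
    (cd_DelC M a).contDiffOn.mul (cd_dR hΩ hg (by norm_num))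
  calc Aop M a (fun q => f q + g q) p
      = dR (fun q => Complex.ofReal (Del M a q.2.1) * dR f q
          + Complex.ofReal (Del M a q.2.1) * dR g q) p := dR_congrOn hΩ h1 hp
    _ = Aop M a f p + Aop M a g p :=
        dR_add (diffAt_of_cd hΩ hdf le_rfl hp) (diffAt_of_cd hΩ hdg le_rfl hp)

lemma Bop_add {f g : F3} (hΩ : IsOpen Ω)
    (hf : ContDiffOn ℝ 2 f Ω) (hg : ContDiffOn ℝ 2 g Ω) {p} (hp : p ∈ Ω) :
    Bop (fun q => f q + g q) p = Bop f p + Bop g p := by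
  have h1 : Set.EqOn (fun q => Complex.ofReal (Real.sin q.2.2) * dTh (fun q' => f q' + g q') q)
      (fun q => Complex.ofReal (Real.sin q.2.2) * dTh f q
        + Complex.ofReal (Real.sin q.2.2) * dTh g q) Ω := by
    intro q hq
    simp only []
    rw [dTh_add (diffAt_of_cd hΩ hf (by norm_num) hq) (diffAt_of_cd hΩ hg (by norm_num) hq)]
    ring
  have hdf : ContDiffOn ℝ 1 (fun q => Complex.ofReal (Real.sin q.2.2) * dTh f q) Ω :=
    cd_sinC.contDiffOn.mul (cd_dTh hΩ hf (by norm_num))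
  have hdg : ContDiffOn ℝ 1 (fun q => Complex.ofReal (Real.sin q.2.2) * dTh g q) Ω :=
    cd_sinC.contDiffOn.mul (cd_dTh hΩ hg (by norm_num))
  calc Bop (fun q => f q + g q) p
      = dTh (fun q => Complex.ofReal (Real.sin q.2.2) * dTh f q
          + Complex.ofReal (Real.sin q.2.2) * dTh g q) p := dTh_congrOn hΩ h1 hp
    _ = Bop f p + Bop g p :=
        dTh_add (diffAt_of_cd hΩ hdf le_rfl hp) (diffAt_of_cd hΩ hdg le_rfl hp)

-- second time derivative of a sum
lemma dT2_add {f g : F3} (hΩ : IsOpen Ω)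
    (hf : ContDiffOn ℝ 2 f Ω) (hg : ContDiffOn ℝ 2 g Ω) {p} (hp : p ∈ Ω) :
    dT (dT (fun q => f q + g q)) p = dT (dT f) p + dT (dT g) p := by
  have h1 : Set.EqOn (dT (fun q => f q + g q)) (fun q => dT f q + dT g q) Ω := fun q hq =>
    dT_add (diffAt_of_cd hΩ hf (by norm_num) hq) (diffAt_of_cd hΩ hg (by norm_num) hq)
  calc dT (dT (fun q => f q + g q)) p
      = dT (fun q => dT f q + dT g q) p := dT_congrOn hΩ h1 hp
    _ = dT (dT f) p + dT (dT g) p :=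
        dT_add (diffAt_of_cd hΩ (cd_dT hΩ hf (by norm_num)) le_rfl hp)
          (diffAt_of_cd hΩ (cd_dT hΩ hg (by norm_num)) le_rfl hp)

/-- Additivity of `P`. -/
lemma Pc_add (M a : ℝ) (m : ℤ) {f g : F3} (hΩ : IsOpen Ω)
    (hf : ContDiffOn ℝ 2 f Ω) (hg : ContDiffOn ℝ 2 g Ω) {p} (hp : p ∈ Ω) :
    Pc M a m (fun q => f q + g q) p = Pc M a m f p + Pc M a m g p := by
  have hA := Aop_add M a hΩ hf hg hp
  have hT2 := dT2_add hΩ hf hg hp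
  have hT1 := dT_add (diffAt_of_cd hΩ hf (by norm_num) hp) (diffAt_of_cd hΩ hg (by norm_num) hp)
  simp only [Pc, hA, hT2, hT1]
  ring

/-- Additivity of `Q`. -/
lemma Qc_add (a : ℝ) (m : ℤ) {f g : F3} (hΩ : IsOpen Ω)
    (hf : ContDiffOn ℝ 2 f Ω) (hg : ContDiffOn ℝ 2 g Ω) {p} (hp : p ∈ Ω) :
    Qc a m (fun q => f q + g q) p = Qc a m f p + Qc a m g p := by
  have hB := Bop_add hΩ hf hg hp
  have hT2 := dT2_add hΩ hf hg hp
  have hT1 := dT_add (diffAt_of_cd hΩ hf (by norm_num) hp) (diffAt_of_cd hΩ hg (by norm_num) hp)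
  simp only [Qc, hB, hT2, hT1]
  ring

/-- `P` passes multiplication by functions of `θ`. -/
lemma Pc_smulTh (M a : ℝ) (m : ℤ) (g : ℝ → ℂ) (f : F3) (p : ℝ × ℝ × ℝ) :
    Pc M a m (fun q => g q.2.2 * f q) p = g p.2.2 * Pc M a m f p := by
  have hA := Aop_smulTh M a g f p
  have hT1 : dT (fun q => g q.2.2 * f q) p = g p.2.2 * dT f p :=
    dT_mul (fun x => g x.2) f p
  have hT2 : dT (dT (fun q => g q.2.2 * f q)) p = g p.2.2 * dT (dT f) p := by
    have h0 : dT (fun q => g q.2.2 * f q) = fun q => g q.2.2 * dT f q := by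
      funext q
      exact dT_mul (fun x => g x.2) f q
    rw [h0]
    exact dT_mul (fun x => g x.2) (dT f) p
  simp only [Pc, hA, hT1, hT2]
  ring

/-- `Q` passes multiplication by functions of `r`. -/
lemma Qc_smulR (a : ℝ) (m : ℤ) (g : ℝ → ℂ) (f : F3) (p : ℝ × ℝ × ℝ) :
    Qc a m (fun q => g q.2.1 * f q) p = g p.2.1 * Qc a m f p := by
  have hB := Bop_smulR g f p
  have hT1 : dT (fun q => g q.2.1 * f q) p = g p.2.1 * dT f p :=
    dT_mul (fun x => g x.1) f p
  have hT2 : dT (dT (fun q => g q.2.1 * f q)) p = g p.2.1 * dT (dT f) p := by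
    have h0 : dT (fun q => g q.2.1 * f q) = fun q => g q.2.1 * dT f q := by
      funext q
      exact dT_mul (fun x => g x.1) f q
    rw [h0]
    exact dT_mul (fun x => g x.1) (dT f) p
  simp only [Qc, hB, hT1, hT2]
  ring

/-- Congruence for `P`. -/
lemma Pc_congr (M a : ℝ) (m : ℤ) {f g : F3} (hΩ : IsOpen Ω) (h : Set.EqOn f g Ω)
    {p} (hp : p ∈ Ω) : Pc M a m f p = Pc M a m g p := by
  have hA := Aop_congr M a hΩ h hp
  have hT1eq : Set.EqOn (dT f) (dT g) Ω := fun q hq => dT_congrOn hΩ h hq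
  have hT2 : dT (dT f) p = dT (dT g) p := dT_congrOn hΩ hT1eq hp
  have hT1 : dT f p = dT g p := dT_congrOn hΩ h hp
  simp only [Pc, hA, hT2, hT1, h hp]

/-- Congruence for `Q`. -/
lemma Qc_congr (a : ℝ) (m : ℤ) {f g : F3} (hΩ : IsOpen Ω) (h : Set.EqOn f g Ω)
    {p} (hp : p ∈ Ω) : Qc a m f p = Qc a m g p := by
  have hB := Bop_congr hΩ h hp
  have hT1eq : Set.EqOn (dT f) (dT g) Ω := fun q hq => dT_congrOn hΩ h hq
  have hT2 : dT (dT f) p = dT (dT g) p := dT_congrOn hΩ hT1eq hp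
  have hT1 : dT f p = dT g p := dT_congrOn hΩ h hp
  simp only [Qc, hB, hT2, hT1, h hp]

end KerrCommAdd
section KerrCommThru

open Complex Set

variable {Ω : Set (ℝ × ℝ × ℝ)}

-- coefficient smoothness on Ω
lemma cd_coefB {n : WithTop ℕ∞} (hΩ : IsOpen Ω) (hs : ∀ q ∈ Ω, Real.sin q.2.2 ≠ 0) :
    ContDiffOn ℝ n (fun q : ℝ×ℝ×ℝ => -(Complex.ofReal (Real.sin q.2.2))⁻¹) Ω :=
  (cd_sinC.contDiffOn.inv (fun q hq => Complex.ofReal_ne_zero.mpr (hs q hq))).neg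

lemma cd_coefT2 (a : ℝ) {n : WithTop ℕ∞} :
    ContDiff ℝ n (fun q : ℝ×ℝ×ℝ => -Complex.ofReal (a ^ 2 * Real.sin q.2.2 ^ 2)) :=
  (Complex.ofRealCLM.contDiff.comp
    (contDiff_const.mul ((Real.contDiff_sin.comp cd_th).pow 2))).neg

lemma cd_coefM2 (m : ℤ) {n : WithTop ℕ∞} (hΩ : IsOpen Ω)
    (hs : ∀ q ∈ Ω, Real.sin q.2.2 ≠ 0) :
    ContDiffOn ℝ n (fun q : ℝ×ℝ×ℝ => (m:ℂ)^2 * (Complex.ofReal (Real.sin q.2.2 ^ 2))⁻¹) Ω := by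
  refine contDiff_const.contDiffOn.mul (ContDiffOn.inv ?_ ?_)
  · exact (Complex.ofRealCLM.contDiff.comp ((Real.contDiff_sin.comp cd_th).pow 2)).contDiffOn
  · intro q hq
    exact Complex.ofReal_ne_zero.mpr (pow_ne_zero 2 (hs q hq))

lemma cd_rho2C (a : ℝ) {n : WithTop ℕ∞} :
    ContDiff ℝ n (fun q : ℝ×ℝ×ℝ => Complex.ofReal ((q.2.1 ^ 2 + a ^ 2) ^ 2)) :=
  Complex.ofRealCLM.contDiff.comp (((cd_r.pow 2).add contDiff_const).pow 2)

lemma cd_rhoC (a : ℝ) {n : WithTop ℕ∞} :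
    ContDiff ℝ n (fun q : ℝ×ℝ×ℝ => Complex.ofReal (q.2.1 ^ 2 + a ^ 2)) :=
  Complex.ofRealCLM.contDiff.comp ((cd_r.pow 2).add contDiff_const)

lemma cd_coefP2 (M a : ℝ) {n : WithTop ℕ∞} (hΩ : IsOpen Ω)
    (hd : ∀ q ∈ Ω, Del M a q.2.1 ≠ 0) :
    ContDiffOn ℝ n (fun q : ℝ×ℝ×ℝ =>
      Complex.ofReal ((q.2.1 ^ 2 + a ^ 2) ^ 2 / Del M a q.2.1)) Ω := by
  have h : (fun q : ℝ×ℝ×ℝ => Complex.ofReal ((q.2.1 ^ 2 + a ^ 2) ^ 2 / Del M a q.2.1))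
      = fun q => Complex.ofReal ((q.2.1 ^ 2 + a ^ 2) ^ 2)
          * (Complex.ofReal (Del M a q.2.1))⁻¹ := by
    funext q
    rw [Complex.ofReal_div, div_eq_mul_inv]
  rw [h]
  exact (cd_rho2C a).contDiffOn.mul
    ((cd_DelC M a).contDiffOn.inv (fun q hq => Complex.ofReal_ne_zero.mpr (hd q hq)))

lemma cd_coefP3 (M a : ℝ) (m : ℤ) {n : WithTop ℕ∞} (hΩ : IsOpen Ω)
    (hd : ∀ q ∈ Ω, Del M a q.2.1 ≠ 0) :
    ContDiffOn ℝ n (fun q : ℝ×ℝ×ℝ => 2 * Complex.I * (m:ℂ) * (a:ℂ)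
      * Complex.ofReal (q.2.1 ^ 2 + a ^ 2) / Complex.ofReal (Del M a q.2.1)) Ω := by
  have h : (fun q : ℝ×ℝ×ℝ => 2 * Complex.I * (m:ℂ) * (a:ℂ)
      * Complex.ofReal (q.2.1 ^ 2 + a ^ 2) / Complex.ofReal (Del M a q.2.1))
      = fun q => (2 * Complex.I * (m:ℂ) * (a:ℂ) * Complex.ofReal (q.2.1 ^ 2 + a ^ 2))
          * (Complex.ofReal (Del M a q.2.1))⁻¹ := by
    funext q
    rw [div_eq_mul_inv]
  rw [h]
  exact (contDiff_const.mul (cd_rhoC a)).contDiffOn.mul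
    ((cd_DelC M a).contDiffOn.inv (fun q hq => Complex.ofReal_ne_zero.mpr (hd q hq)))

lemma cd_coefP4 (M a : ℝ) (m : ℤ) {n : WithTop ℕ∞} (hΩ : IsOpen Ω)
    (hd : ∀ q ∈ Ω, Del M a q.2.1 ≠ 0) :
    ContDiffOn ℝ n (fun q : ℝ×ℝ×ℝ =>
      -((m:ℂ)^2 * Complex.ofReal (a ^ 2 / Del M a q.2.1))) Ω := by
  have h : (fun q : ℝ×ℝ×ℝ => -((m:ℂ)^2 * Complex.ofReal (a ^ 2 / Del M a q.2.1)))
      = fun q => -((m:ℂ)^2 * (Complex.ofReal (a^2) * (Complex.ofReal (Del M a q.2.1))⁻¹)) := by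
    funext q
    rw [Complex.ofReal_div, div_eq_mul_inv]
  rw [h]
  exact (contDiff_const.contDiffOn.mul (contDiff_const.contDiffOn.mul
    ((cd_DelC M a).contDiffOn.inv (fun q hq => Complex.ofReal_ne_zero.mpr (hd q hq))))).neg

/-- Splitting of `Q` into a sum of four products. -/
lemma Qc_split (a : ℝ) (m : ℤ) (v : F3) : Qc a m v = fun q =>
    -(Complex.ofReal (Real.sin q.2.2))⁻¹ * Bop v q
    + (-Complex.ofReal (a ^ 2 * Real.sin q.2.2 ^ 2) * dT (dT v) q
    + (-(2 * Complex.I * (a:ℂ) * (m:ℂ)) * dT v q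
    + ((m:ℂ)^2 * (Complex.ofReal (Real.sin q.2.2 ^ 2))⁻¹) * v q)) := by
  funext q
  simp only [Qc]
  ring

/-- `∂ₜ` commutes with `Q`. -/
lemma dT_thru_Qc (a : ℝ) (m : ℤ) (hΩ : IsOpen Ω) (hs : ∀ q ∈ Ω, Real.sin q.2.2 ≠ 0)
    {v : F3} (hv : ContDiffOn ℝ 3 v Ω) {p} (hp : p ∈ Ω) :
    dT (Qc a m v) p = Qc a m (dT v) p := by
  have hB1 : ContDiffOn ℝ 1 (Bop v) Ω := cd_Bop hΩ hv (by norm_num)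
  have hT2 : ContDiffOn ℝ 1 (dT (dT v)) Ω :=
    cd_dT hΩ (cd_dT hΩ hv (by norm_num) : ContDiffOn ℝ 2 (dT v) Ω) (by norm_num)
  have hT1 : ContDiffOn ℝ 1 (dT v) Ω := cd_dT hΩ hv (by norm_num)
  have d1 : DifferentiableAt ℝ (fun q : ℝ×ℝ×ℝ =>
      -(Complex.ofReal (Real.sin q.2.2))⁻¹ * Bop v q) p :=
    diffAt_of_cd hΩ ((cd_coefB hΩ hs).mul hB1) le_rfl hp
  have d2 : DifferentiableAt ℝ (fun q : ℝ×ℝ×ℝ =>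
      -Complex.ofReal (a ^ 2 * Real.sin q.2.2 ^ 2) * dT (dT v) q) p :=
    diffAt_of_cd hΩ ((cd_coefT2 a).contDiffOn.mul hT2) le_rfl hp
  have d3 : DifferentiableAt ℝ (fun q : ℝ×ℝ×ℝ =>
      -(2 * Complex.I * (a:ℂ) * (m:ℂ)) * dT v q) p :=
    diffAt_of_cd hΩ (contDiff_const.contDiffOn.mul hT1) le_rfl hp
  have d4 : DifferentiableAt ℝ (fun q : ℝ×ℝ×ℝ =>
      ((m:ℂ)^2 * (Complex.ofReal (Real.sin q.2.2 ^ 2))⁻¹) * v q) p :=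
    diffAt_of_cd hΩ ((cd_coefM2 m hΩ hs).mul (hv.of_le (by norm_num))) le_rfl hp
  have e1 : dT (fun q : ℝ×ℝ×ℝ => -(Complex.ofReal (Real.sin q.2.2))⁻¹ * Bop v q) p
      = -(Complex.ofReal (Real.sin p.2.2))⁻¹ * dT (Bop v) p :=
    dT_mul (fun x => -(Complex.ofReal (Real.sin x.2))⁻¹) (Bop v) p
  have e2 : dT (fun q : ℝ×ℝ×ℝ =>
      -Complex.ofReal (a ^ 2 * Real.sin q.2.2 ^ 2) * dT (dT v) q) p
      = -Complex.ofReal (a ^ 2 * Real.sin p.2.2 ^ 2) * dT (dT (dT v)) p :=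
    dT_mul (fun x => -Complex.ofReal (a ^ 2 * Real.sin x.2 ^ 2)) (dT (dT v)) p
  have e3 : dT (fun q : ℝ×ℝ×ℝ => -(2 * Complex.I * (a:ℂ) * (m:ℂ)) * dT v q) p
      = -(2 * Complex.I * (a:ℂ) * (m:ℂ)) * dT (dT v) p :=
    dT_mul (fun _ => -(2 * Complex.I * (a:ℂ) * (m:ℂ))) (dT v) p
  have e4 : dT (fun q : ℝ×ℝ×ℝ =>
      ((m:ℂ)^2 * (Complex.ofReal (Real.sin q.2.2 ^ 2))⁻¹) * v q) p
      = ((m:ℂ)^2 * (Complex.ofReal (Real.sin p.2.2 ^ 2))⁻¹) * dT v p :=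
    dT_mul (fun x => (m:ℂ)^2 * (Complex.ofReal (Real.sin x.2 ^ 2))⁻¹) v p
  have eB : dT (Bop v) p = Bop (dT v) p := L_TB hΩ hv hp
  rw [Qc_split a m v, dT_add4 d1 d2 d3 d4, e1, e2, e3, e4, eB]
  simp only [Qc]
  ring

/-- `∂ₜ²` commutes with `Q`. -/
lemma dT2_thru_Qc (a : ℝ) (m : ℤ) (hΩ : IsOpen Ω) (hs : ∀ q ∈ Ω, Real.sin q.2.2 ≠ 0)
    {v : F3} (hv : ContDiffOn ℝ 4 v Ω) {p} (hp : p ∈ Ω) :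
    dT (dT (Qc a m v)) p = Qc a m (dT (dT v)) p := by
  have hEq : Set.EqOn (dT (Qc a m v)) (Qc a m (dT v)) Ω := fun q hq =>
    dT_thru_Qc a m hΩ hs (hv.of_le (by norm_num)) hq
  calc dT (dT (Qc a m v)) p = dT (Qc a m (dT v)) p := dT_congrOn hΩ hEq hp
    _ = Qc a m (dT (dT v)) p :=
        dT_thru_Qc a m hΩ hs (cd_dT hΩ hv (by norm_num)) hp

/-- `A` commutes with `Q`. -/
lemma Aop_thru_Qc (M a : ℝ) (m : ℤ) (hΩ : IsOpen Ω)
    (hs : ∀ q ∈ Ω, Real.sin q.2.2 ≠ 0)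
    {v : F3} (hv : ContDiffOn ℝ 4 v Ω) {p} (hp : p ∈ Ω) :
    Aop M a (Qc a m v) p = Qc a m (Aop M a v) p := by
  have hB2 : ContDiffOn ℝ 2 (Bop v) Ω := cd_Bop hΩ hv (by norm_num)
  have hT2' : ContDiffOn ℝ 2 (dT (dT v)) Ω :=
    cd_dT hΩ (cd_dT hΩ hv (by norm_num) : ContDiffOn ℝ 3 (dT v) Ω) (by norm_num)
  have hT1' : ContDiffOn ℝ 2 (dT v) Ω := cd_dT hΩ hv (by norm_num)
  have h1 : ContDiffOn ℝ 2 (fun q : ℝ×ℝ×ℝ =>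
      -(Complex.ofReal (Real.sin q.2.2))⁻¹ * Bop v q) Ω := (cd_coefB hΩ hs).mul hB2
  have h2 : ContDiffOn ℝ 2 (fun q : ℝ×ℝ×ℝ =>
      -Complex.ofReal (a ^ 2 * Real.sin q.2.2 ^ 2) * dT (dT v) q) Ω :=
    (cd_coefT2 a).contDiffOn.mul hT2'
  have h3 : ContDiffOn ℝ 2 (fun q : ℝ×ℝ×ℝ =>
      -(2 * Complex.I * (a:ℂ) * (m:ℂ)) * dT v q) Ω := contDiff_const.contDiffOn.mul hT1'
  have h4 : ContDiffOn ℝ 2 (fun q : ℝ×ℝ×ℝ =>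
      ((m:ℂ)^2 * (Complex.ofReal (Real.sin q.2.2 ^ 2))⁻¹) * v q) Ω :=
    (cd_coefM2 m hΩ hs).mul (hv.of_le (by norm_num))
  have a1 : Aop M a (fun q : ℝ×ℝ×ℝ =>
      -(Complex.ofReal (Real.sin q.2.2))⁻¹ * Bop v q
      + (-Complex.ofReal (a ^ 2 * Real.sin q.2.2 ^ 2) * dT (dT v) q
      + (-(2 * Complex.I * (a:ℂ) * (m:ℂ)) * dT v q
      + ((m:ℂ)^2 * (Complex.ofReal (Real.sin q.2.2 ^ 2))⁻¹) * v q))) p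
      = Aop M a (fun q : ℝ×ℝ×ℝ => -(Complex.ofReal (Real.sin q.2.2))⁻¹ * Bop v q) p
      + (Aop M a (fun q : ℝ×ℝ×ℝ =>
          -Complex.ofReal (a ^ 2 * Real.sin q.2.2 ^ 2) * dT (dT v) q) p
      + (Aop M a (fun q : ℝ×ℝ×ℝ => -(2 * Complex.I * (a:ℂ) * (m:ℂ)) * dT v q) p
      + Aop M a (fun q : ℝ×ℝ×ℝ =>
          ((m:ℂ)^2 * (Complex.ofReal (Real.sin q.2.2 ^ 2))⁻¹) * v q) p)) := by
    rw [Aop_add M a hΩ h1 (h2.add (h3.add h4)) hp, Aop_add M a hΩ h2 (h3.add h4) hp,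
      Aop_add M a hΩ h3 h4 hp]
  have e1 : Aop M a (fun q : ℝ×ℝ×ℝ => -(Complex.ofReal (Real.sin q.2.2))⁻¹ * Bop v q) p
      = -(Complex.ofReal (Real.sin p.2.2))⁻¹ * Aop M a (Bop v) p :=
    Aop_smulTh M a (fun x => -(Complex.ofReal (Real.sin x))⁻¹) (Bop v) p
  have e2 : Aop M a (fun q : ℝ×ℝ×ℝ =>
      -Complex.ofReal (a ^ 2 * Real.sin q.2.2 ^ 2) * dT (dT v) q) p
      = -Complex.ofReal (a ^ 2 * Real.sin p.2.2 ^ 2) * Aop M a (dT (dT v)) p :=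
    Aop_smulTh M a (fun x => -Complex.ofReal (a ^ 2 * Real.sin x ^ 2)) (dT (dT v)) p
  have e3 : Aop M a (fun q : ℝ×ℝ×ℝ => -(2 * Complex.I * (a:ℂ) * (m:ℂ)) * dT v q) p
      = -(2 * Complex.I * (a:ℂ) * (m:ℂ)) * Aop M a (dT v) p :=
    Aop_smulTh M a (fun _ => -(2 * Complex.I * (a:ℂ) * (m:ℂ))) (dT v) p
  have e4 : Aop M a (fun q : ℝ×ℝ×ℝ =>
      ((m:ℂ)^2 * (Complex.ofReal (Real.sin q.2.2 ^ 2))⁻¹) * v q) p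
      = ((m:ℂ)^2 * (Complex.ofReal (Real.sin p.2.2 ^ 2))⁻¹) * Aop M a v p :=
    Aop_smulTh M a (fun x => (m:ℂ)^2 * (Complex.ofReal (Real.sin x ^ 2))⁻¹) v p
  have eAB : Aop M a (Bop v) p = Bop (Aop M a v) p := L_AB M a hΩ hv hp
  have eAT2 : Aop M a (dT (dT v)) p = dT (dT (Aop M a v)) p := by
    have hEq : Set.EqOn (Aop M a (dT v)) (dT (Aop M a v)) Ω := fun q hq =>
      (L_AT M a hΩ (hv.of_le (by norm_num)) hq).symm
    calc Aop M a (dT (dT v)) p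
        = dT (Aop M a (dT v)) p := (L_AT M a hΩ (cd_dT hΩ hv (by norm_num)) hp).symm
      _ = dT (dT (Aop M a v)) p := dT_congrOn hΩ hEq hp
  have eAT1 : Aop M a (dT v) p = dT (Aop M a v) p :=
    (L_AT M a hΩ (hv.of_le (by norm_num)) hp).symm
  rw [Qc_split a m v] at *
  rw [a1, e1, e2, e3, e4, eAB, eAT2, eAT1]
  simp only [Qc]
  ring

/-- The commutator `[P,Q] = 0` on `C⁴` functions. -/
lemma PQ_comm (M a : ℝ) (m : ℤ) (hΩ : IsOpen Ω)
    (hs : ∀ q ∈ Ω, Real.sin q.2.2 ≠ 0) (hd : ∀ q ∈ Ω, Del M a q.2.1 ≠ 0)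
    {u : F3} (hu : ContDiffOn ℝ 4 u Ω) {p} (hp : p ∈ Ω) :
    Pc M a m (Qc a m u) p = Qc a m (Pc M a m u) p := by
  have hA2 : ContDiffOn ℝ 2 (Aop M a u) Ω := cd_Aop M a hΩ hu (by norm_num)
  have hT2' : ContDiffOn ℝ 2 (dT (dT u)) Ω :=
    cd_dT hΩ (cd_dT hΩ hu (by norm_num) : ContDiffOn ℝ 3 (dT u) Ω) (by norm_num)
  have hT1' : ContDiffOn ℝ 2 (dT u) Ω := cd_dT hΩ hu (by norm_num)
  -- split P u
  have hsplitP : Pc M a m u = fun q : ℝ×ℝ×ℝ =>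
      (-1 : ℂ) * Aop M a u q
      + (Complex.ofReal ((q.2.1 ^ 2 + a ^ 2) ^ 2 / Del M a q.2.1) * dT (dT u) q
      + ((2 * Complex.I * (m:ℂ) * (a:ℂ) * Complex.ofReal (q.2.1 ^ 2 + a ^ 2)
          / Complex.ofReal (Del M a q.2.1)) * dT u q
      + (-((m:ℂ)^2 * Complex.ofReal (a ^ 2 / Del M a q.2.1))) * u q)) := by
    funext q
    simp only [Pc]
    ring
  have h1 : ContDiffOn ℝ 2 (fun q : ℝ×ℝ×ℝ => (-1 : ℂ) * Aop M a u q) Ω :=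
    contDiff_const.contDiffOn.mul hA2
  have h2 : ContDiffOn ℝ 2 (fun q : ℝ×ℝ×ℝ =>
      Complex.ofReal ((q.2.1 ^ 2 + a ^ 2) ^ 2 / Del M a q.2.1) * dT (dT u) q) Ω :=
    (cd_coefP2 M a hΩ hd).mul hT2'
  have h3 : ContDiffOn ℝ 2 (fun q : ℝ×ℝ×ℝ =>
      (2 * Complex.I * (m:ℂ) * (a:ℂ) * Complex.ofReal (q.2.1 ^ 2 + a ^ 2)
        / Complex.ofReal (Del M a q.2.1)) * dT u q) Ω :=
    (cd_coefP3 M a m hΩ hd).mul hT1'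
  have h4 : ContDiffOn ℝ 2 (fun q : ℝ×ℝ×ℝ =>
      (-((m:ℂ)^2 * Complex.ofReal (a ^ 2 / Del M a q.2.1))) * u q) Ω :=
    (cd_coefP4 M a m hΩ hd).mul (hu.of_le (by norm_num))
  -- expand RHS
  have hR : Qc a m (Pc M a m u) p
      = (-1 : ℂ) * Qc a m (Aop M a u) p
      + (Complex.ofReal ((p.2.1 ^ 2 + a ^ 2) ^ 2 / Del M a p.2.1) * Qc a m (dT (dT u)) p
      + ((2 * Complex.I * (m:ℂ) * (a:ℂ) * Complex.ofReal (p.2.1 ^ 2 + a ^ 2)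
          / Complex.ofReal (Del M a p.2.1)) * Qc a m (dT u) p
      + (-((m:ℂ)^2 * Complex.ofReal (a ^ 2 / Del M a p.2.1))) * Qc a m u p)) := by
    rw [hsplitP]
    rw [Qc_add a m hΩ h1 (h2.add (h3.add h4)) hp, Qc_add a m hΩ h2 (h3.add h4) hp,
      Qc_add a m hΩ h3 h4 hp]
    have e1 : Qc a m (fun q : ℝ×ℝ×ℝ => (-1 : ℂ) * Aop M a u q) p
        = (-1 : ℂ) * Qc a m (Aop M a u) p :=
      Qc_smulR a m (fun _ => (-1 : ℂ)) (Aop M a u) p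
    have e2 : Qc a m (fun q : ℝ×ℝ×ℝ =>
        Complex.ofReal ((q.2.1 ^ 2 + a ^ 2) ^ 2 / Del M a q.2.1) * dT (dT u) q) p
        = Complex.ofReal ((p.2.1 ^ 2 + a ^ 2) ^ 2 / Del M a p.2.1) * Qc a m (dT (dT u)) p :=
      Qc_smulR a m (fun x => Complex.ofReal ((x ^ 2 + a ^ 2) ^ 2 / Del M a x)) (dT (dT u)) p
    have e3 : Qc a m (fun q : ℝ×ℝ×ℝ =>
        (2 * Complex.I * (m:ℂ) * (a:ℂ) * Complex.ofReal (q.2.1 ^ 2 + a ^ 2)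
          / Complex.ofReal (Del M a q.2.1)) * dT u q) p
        = (2 * Complex.I * (m:ℂ) * (a:ℂ) * Complex.ofReal (p.2.1 ^ 2 + a ^ 2)
          / Complex.ofReal (Del M a p.2.1)) * Qc a m (dT u) p :=
      Qc_smulR a m (fun x => 2 * Complex.I * (m:ℂ) * (a:ℂ)
        * Complex.ofReal (x ^ 2 + a ^ 2) / Complex.ofReal (Del M a x)) (dT u) p
    have e4 : Qc a m (fun q : ℝ×ℝ×ℝ =>
        (-((m:ℂ)^2 * Complex.ofReal (a ^ 2 / Del M a q.2.1))) * u q) p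
        = (-((m:ℂ)^2 * Complex.ofReal (a ^ 2 / Del M a p.2.1))) * Qc a m u p :=
      Qc_smulR a m (fun x => -((m:ℂ)^2 * Complex.ofReal (a ^ 2 / Del M a x))) u p
    rw [e1, e2, e3, e4]
  -- expand LHS
  have hQu3 : ContDiffOn ℝ 2 (Qc a m u) Ω := by
    rw [Qc_split a m u]
    exact ((cd_coefB hΩ hs).mul (cd_Bop hΩ hu (by norm_num))).add
      (((cd_coefT2 a).contDiffOn.mul hT2').add
        ((contDiff_const.contDiffOn.mul hT1').add
          ((cd_coefM2 m hΩ hs).mul (hu.of_le (by norm_num)))))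
  have hL : Pc M a m (Qc a m u) p
      = -Qc a m (Aop M a u) p
      + Complex.ofReal ((p.2.1 ^ 2 + a ^ 2) ^ 2 / Del M a p.2.1) * Qc a m (dT (dT u)) p
      + 2 * Complex.I * (m:ℂ) * (a:ℂ) * Complex.ofReal (p.2.1 ^ 2 + a ^ 2)
          / Complex.ofReal (Del M a p.2.1) * Qc a m (dT u) p
      - (m:ℂ)^2 * Complex.ofReal (a ^ 2 / Del M a p.2.1) * Qc a m u p := by
    have eA : Aop M a (Qc a m u) p = Qc a m (Aop M a u) p := Aop_thru_Qc M a m hΩ hs hu hp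
    have eT2 : dT (dT (Qc a m u)) p = Qc a m (dT (dT u)) p := dT2_thru_Qc a m hΩ hs hu hp
    have eT1 : dT (Qc a m u) p = Qc a m (dT u) p :=
      dT_thru_Qc a m hΩ hs (hu.of_le (by norm_num)) hp
    simp only [Pc, eA, eT2, eT1]
  rw [hL, hR]
  ring

end KerrCommThru
section KerrCommFinal

open Complex Set

lemma isOpen_OmegaR (M a : ℝ) : IsOpen (OmegaR M a) := by
  have h1 : IsOpen ((fun p : ℝ×ℝ×ℝ => p.2.1) ⁻¹' (Set.Ioi (rplus M a))) :=
    isOpen_Ioi.preimage (by fun_prop)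
  have h2 : IsOpen ((fun p : ℝ×ℝ×ℝ => p.2.2) ⁻¹' (Set.Ioo 0 Real.pi)) :=
    isOpen_Ioo.preimage (by fun_prop)
  have : OmegaR M a = (fun p : ℝ×ℝ×ℝ => p.2.1) ⁻¹' (Set.Ioi (rplus M a))
      ∩ (fun p : ℝ×ℝ×ℝ => p.2.2) ⁻¹' (Set.Ioo 0 Real.pi) := by
    ext p
    simp [OmegaR, and_assoc]
  rw [this]
  exact h1.inter h2

variable {M a : ℝ} {m : ℤ}

lemma r_pos (hM : 0 < M) {p : ℝ×ℝ×ℝ} (hp : p ∈ OmegaR M a) : 0 < p.2.1 := by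
  have h1 : rplus M a < p.2.1 := hp.1
  have h2 : 0 ≤ Real.sqrt (M ^ 2 - a ^ 2) := Real.sqrt_nonneg _
  simp only [rplus] at h1
  linarith

lemma Del_pos (hM : 0 < M) (ha : 0 ≤ a) (haM : a ≤ M) {p : ℝ×ℝ×ℝ} (hp : p ∈ OmegaR M a) :
    0 < Del M a p.2.1 := by
  have h1 : rplus M a < p.2.1 := hp.1
  have hMa : (0:ℝ) ≤ M ^ 2 - a ^ 2 := by nlinarith
  have hs : Real.sqrt (M ^ 2 - a ^ 2) ^ 2 = M ^ 2 - a ^ 2 := Real.sq_sqrt hMa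
  have h0 : 0 ≤ Real.sqrt (M ^ 2 - a ^ 2) := Real.sqrt_nonneg _
  have h2 : Real.sqrt (M ^ 2 - a ^ 2) < p.2.1 - M := by
    simp only [rplus] at h1
    linarith
  have h3 : M ^ 2 - a ^ 2 < (p.2.1 - M) ^ 2 := by nlinarith
  simp only [Del]
  nlinarith

lemma sinp_pos {p : ℝ×ℝ×ℝ} (hp : p ∈ OmegaR M a) : 0 < Real.sin p.2.2 :=
  Real.sin_pos_of_pos_of_lt_pi hp.2.1 hp.2.2

lemma Sig_pos (hM : 0 < M) {p : ℝ×ℝ×ℝ} (hp : p ∈ OmegaR M a) : 0 < Sig a p.2.1 p.2.2 := by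
  have := r_pos hM hp
  simp only [Sig]
  nlinarith [sq_nonneg (a * Real.cos p.2.2)]

lemma Wf_pos (hM : 0 < M) (ha : 0 ≤ a) {p : ℝ×ℝ×ℝ} (hp : p ∈ OmegaR M a) : 0 < Wf M a p := by
  have h1 := r_pos hM hp
  have h2 := Sig_pos hM hp
  have h4 : 0 ≤ 2 * M * a ^ 2 * p.2.1 * Real.sin p.2.2 ^ 2 := by positivity
  have h5 : 0 < (p.2.1 ^ 2 + a ^ 2) * Sig a p.2.1 p.2.2 := by positivity
  simp only [Wf]
  linarith

set_option maxHeartbeats 1000000 in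
lemma nbox_scalar (Dr Sg Wr snr Mr ar rr : ℝ) (mm : ℤ) (X1 X2 X3 X4 X5 : ℂ)
    (hD : Dr ≠ 0) (hS : Sg ≠ 0) (hW : Wr ≠ 0) (hsn : snr ≠ 0)
    (hDdef : Dr = rr ^ 2 - 2 * Mr * rr + ar ^ 2) :
    Complex.ofReal (Dr * Sg / Wr) * ((Complex.ofReal Sg)⁻¹ *
      (Complex.ofReal ((rr ^ 2 + ar ^ 2) ^ 2 / Dr - ar ^ 2 * snr ^ 2) * X1
        + 4 * Complex.I * (mm : ℂ) * Complex.ofReal Mr * Complex.ofReal ar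
            * Complex.ofReal rr / Complex.ofReal Dr * X2
        - X3
        - (Complex.ofReal snr)⁻¹ * X4
        - (mm : ℂ) ^ 2 * Complex.ofReal (ar ^ 2 / Dr - (snr ^ 2)⁻¹) * X5))
    = Complex.ofReal (Dr / Wr) *
      ((-X3 + Complex.ofReal ((rr ^ 2 + ar ^ 2) ^ 2 / Dr) * X1
          + 2 * Complex.I * (mm : ℂ) * (ar : ℂ) * Complex.ofReal (rr ^ 2 + ar ^ 2)
              / Complex.ofReal Dr * X2
          - (mm : ℂ) ^ 2 * Complex.ofReal (ar ^ 2 / Dr) * X5)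
        + (-((Complex.ofReal snr)⁻¹ * X4)
          - Complex.ofReal (ar ^ 2 * snr ^ 2) * X1
          - 2 * Complex.I * (ar : ℂ) * (mm : ℂ) * X2
          + (mm : ℂ) ^ 2 * (Complex.ofReal (snr ^ 2))⁻¹ * X5)) := by
  have hDC : (Dr : ℂ) ≠ 0 := Complex.ofReal_ne_zero.mpr hD
  have hSC : (Sg : ℂ) ≠ 0 := Complex.ofReal_ne_zero.mpr hS
  have hWC : (Wr : ℂ) ≠ 0 := Complex.ofReal_ne_zero.mpr hW
  have hsC : (snr : ℂ) ≠ 0 := Complex.ofReal_ne_zero.mpr hsn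
  have key : ∀ E F : ℂ, E = F → Complex.ofReal (Dr * Sg / Wr) * ((Complex.ofReal Sg)⁻¹ * E)
      = Complex.ofReal (Dr / Wr) * F := by
    intro E F h
    rw [h]
    push_cast
    field_simp
  apply key
  have hDdefC : (Dr : ℂ) = (rr:ℂ) ^ 2 - 2 * (Mr:ℂ) * (rr:ℂ) + (ar:ℂ) ^ 2 := by
    exact_mod_cast congrArg Complex.ofReal hDdef
  push_cast
  field_simp
  rw [hDdefC]
  ring

lemma I3_scalar (Dr Wr s2 rho2 : ℝ) (P Q : ℂ)
    (hD : Dr ≠ 0) (hW : Wr ≠ 0) (hrel : rho2 = Dr * s2 + Wr) :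
    (Complex.ofReal Wr)⁻¹ * (Complex.ofReal (Dr * s2) * P + Complex.ofReal rho2 * Q)
    = Complex.ofReal s2 * (Complex.ofReal (Dr / Wr) * (P + Q)) + Q := by
  have hDC : (Dr : ℂ) ≠ 0 := Complex.ofReal_ne_zero.mpr hD
  have hWC : (Wr : ℂ) ≠ 0 := Complex.ofReal_ne_zero.mpr hW
  subst hrel
  push_cast
  field_simp
  ring

lemma I4_scalar (Dr Wr s2 rho2 : ℝ) (P Q : ℂ)
    (hD : Dr ≠ 0) (hW : Wr ≠ 0) (hrel : rho2 = Dr * s2 + Wr) :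
    (Complex.ofReal Wr)⁻¹ * (Complex.ofReal (Dr * s2) * P + Complex.ofReal rho2 * Q)
    = Complex.ofReal (rho2 / Dr) * (Complex.ofReal (Dr / Wr) * (P + Q)) + (-1 : ℂ) * P := by
  have hDC : (Dr : ℂ) ≠ 0 := Complex.ofReal_ne_zero.mpr hD
  have hWC : (Wr : ℂ) ≠ 0 := Complex.ofReal_ne_zero.mpr hW
  subst hrel
  push_cast
  field_simp
  ring
set_option maxHeartbeats 1000000 in
lemma s_scalar (Dr Sg Wr snr ar rr : ℝ) (mm : ℤ) (X1 X2 X3 X4 X5 : ℂ)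
    (hD : Dr ≠ 0) (hsn : snr ≠ 0)
    (hSdef : Sg = rr ^ 2 + ar ^ 2 - ar ^ 2 * snr ^ 2) :
    (Complex.ofReal Wr)⁻¹ *
      (-2 * Complex.I * (mm : ℂ) * Complex.ofReal ar
          * Complex.ofReal ((rr ^ 2 + ar ^ 2) * Sg) * X2
        - Complex.ofReal (ar ^ 2 * snr ^ 2 * Dr) * X3
        - Complex.ofReal ((rr ^ 2 + ar ^ 2) ^ 2 / snr) * X4
        + (mm : ℂ) ^ 2 * Complex.ofReal (Sg / snr ^ 2 * (Sg + 2 * ar ^ 2 * snr ^ 2)) * X5)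
    = (Complex.ofReal Wr)⁻¹ *
      (Complex.ofReal (Dr * (ar ^ 2 * snr ^ 2)) *
        (-X3 + Complex.ofReal ((rr ^ 2 + ar ^ 2) ^ 2 / Dr) * X1
          + 2 * Complex.I * (mm : ℂ) * (ar : ℂ) * Complex.ofReal (rr ^ 2 + ar ^ 2)
              / Complex.ofReal Dr * X2
          - (mm : ℂ) ^ 2 * Complex.ofReal (ar ^ 2 / Dr) * X5)
      + Complex.ofReal ((rr ^ 2 + ar ^ 2) ^ 2) *
        (-((Complex.ofReal snr)⁻¹ * X4)
          - Complex.ofReal (ar ^ 2 * snr ^ 2) * X1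
          - 2 * Complex.I * (ar : ℂ) * (mm : ℂ) * X2
          + (mm : ℂ) ^ 2 * (Complex.ofReal (snr ^ 2))⁻¹ * X5)) := by
  have hDC : (Dr : ℂ) ≠ 0 := Complex.ofReal_ne_zero.mpr hD
  have hsC : (snr : ℂ) ≠ 0 := Complex.ofReal_ne_zero.mpr hsn
  refine congrArg (fun z => (Complex.ofReal Wr)⁻¹ * z) ?_
  have hSgC : (Sg : ℂ) = (rr:ℂ) ^ 2 + (ar:ℂ) ^ 2 - (ar:ℂ) ^ 2 * (snr:ℂ) ^ 2 := by
    exact_mod_cast congrArg Complex.ofReal hSdef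
  push_cast
  rw [hSgC]
  field_simp
  ring

lemma Del_rfl {p : ℝ×ℝ×ℝ} : Del M a p.2.1 = p.2.1 ^ 2 - 2 * M * p.2.1 + a ^ 2 := rfl

lemma Sig_sin {p : ℝ×ℝ×ℝ} : Sig a p.2.1 p.2.2
    = p.2.1 ^ 2 + a ^ 2 - a ^ 2 * Real.sin p.2.2 ^ 2 := by
  simp only [Sig]
  rw [Real.cos_sq']
  ring

lemma rho_rel {p : ℝ×ℝ×ℝ} : (p.2.1 ^ 2 + a ^ 2) ^ 2
    = Del M a p.2.1 * (a ^ 2 * Real.sin p.2.2 ^ 2) + Wf M a p := by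
  simp only [Del, Wf, Sig]
  rw [Real.cos_sq']
  ring

/-- `Nbox = (Δ/W)(P + Q)` pointwise on `Ω`. -/
lemma nbox_eq (hM : 0 < M) (ha : 0 ≤ a) (haM : a ≤ M) (v : F3)
    {p : ℝ×ℝ×ℝ} (hp : p ∈ OmegaR M a) :
    Nbox M a m v p = Complex.ofReal (Del M a p.2.1 / Wf M a p)
      * (Pc M a m v p + Qc a m v p) := by
  have hden : ((p.2.1 ^ 2 + a ^ 2) * Sig a p.2.1 p.2.2
      + 2 * M * a ^ 2 * p.2.1 * Real.sin p.2.2 ^ 2) = Wf M a p := rfl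
  simp only [Nbox, boxm, Pc, Qc, Aop, Bop, hden]
  exact nbox_scalar (Del M a p.2.1) (Sig a p.2.1 p.2.2) (Wf M a p) (Real.sin p.2.2)
    M a p.2.1 m (dT (dT v) p) (dT v p)
    (dR (fun q => Complex.ofReal (Del M a q.2.1) * dR v q) p)
    (dTh (fun q => Complex.ofReal (Real.sin q.2.2) * dTh v q) p) (v p)
    (Del_pos hM ha haM hp).ne' (Sig_pos hM hp).ne' (Wf_pos hM ha hp).ne'
    (sinp_pos hp).ne' Del_rfl

/-- `Sop = W⁻¹ (Δ a² sin²θ · P + (r²+a²)² · Q)` pointwise on `Ω`. -/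
lemma s_eq (hM : 0 < M) (ha : 0 ≤ a) (haM : a ≤ M) (v : F3)
    {p : ℝ×ℝ×ℝ} (hp : p ∈ OmegaR M a) :
    Sop M a m v p = (Complex.ofReal (Wf M a p))⁻¹
      * (Complex.ofReal (Del M a p.2.1 * (a ^ 2 * Real.sin p.2.2 ^ 2)) * Pc M a m v p
        + Complex.ofReal ((p.2.1 ^ 2 + a ^ 2) ^ 2) * Qc a m v p) := by
  have hden : ((p.2.1 ^ 2 + a ^ 2) * Sig a p.2.1 p.2.2
      + 2 * M * a ^ 2 * p.2.1 * Real.sin p.2.2 ^ 2) = Wf M a p := rfl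
  simp only [Sop, Pop, Pc, Qc, Aop, Bop, hden]
  exact s_scalar (Del M a p.2.1) (Sig a p.2.1 p.2.2) (Wf M a p) (Real.sin p.2.2)
    a p.2.1 m (dT (dT v) p) (dT v p)
    (dR (fun q => Complex.ofReal (Del M a q.2.1) * dR v q) p)
    (dTh (fun q => Complex.ofReal (Real.sin q.2.2) * dTh v q) p) (v p)
    (Del_pos hM ha haM hp).ne' (sinp_pos hp).ne' Sig_sin

/-- `Sop u = a²sin²θ · Nbox u + Q u` pointwise on `Ω`. -/
lemma I3_eq (hM : 0 < M) (ha : 0 ≤ a) (haM : a ≤ M) (v : F3)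
    {p : ℝ×ℝ×ℝ} (hp : p ∈ OmegaR M a) :
    Sop M a m v p = Complex.ofReal (a ^ 2 * Real.sin p.2.2 ^ 2) * Nbox M a m v p
      + Qc a m v p := by
  rw [s_eq hM ha haM v hp, nbox_eq hM ha haM v hp]
  exact I3_scalar (Del M a p.2.1) (Wf M a p) (a ^ 2 * Real.sin p.2.2 ^ 2)
    ((p.2.1 ^ 2 + a ^ 2) ^ 2) (Pc M a m v p) (Qc a m v p)
    (Del_pos hM ha haM hp).ne' (Wf_pos hM ha hp).ne' rho_rel

/-- `Sop u = ((r²+a²)²/Δ) · Nbox u + (-1) · P u` pointwise on `Ω`. -/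
lemma I4_eq (hM : 0 < M) (ha : 0 ≤ a) (haM : a ≤ M) (v : F3)
    {p : ℝ×ℝ×ℝ} (hp : p ∈ OmegaR M a) :
    Sop M a m v p = Complex.ofReal ((p.2.1 ^ 2 + a ^ 2) ^ 2 / Del M a p.2.1)
        * Nbox M a m v p + (-1 : ℂ) * Pc M a m v p := by
  rw [s_eq hM ha haM v hp, nbox_eq hM ha haM v hp]
  exact I4_scalar (Del M a p.2.1) (Wf M a p) (a ^ 2 * Real.sin p.2.2 ^ 2)
    ((p.2.1 ^ 2 + a ^ 2) ^ 2) (Pc M a m v p) (Qc a m v p)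
    (Del_pos hM ha haM hp).ne' (Wf_pos hM ha hp).ne' rho_rel

end KerrCommFinal
section KerrCommMain

open Complex Set

variable {M a : ℝ} {m : ℤ}

lemma final_scalar (Dr Wr s2 rho2 : ℝ) (X Y Z : ℂ) (hD : Dr ≠ 0) (hW : Wr ≠ 0) :
    Complex.ofReal (Dr / Wr) * ((Complex.ofReal s2 * X + Z)
        + (Complex.ofReal (rho2 / Dr) * Y + (-1 : ℂ) * Z))
    = (Complex.ofReal Wr)⁻¹
        * (Complex.ofReal (Dr * s2) * X + Complex.ofReal rho2 * Y) := by
  have hDC : (Dr : ℂ) ≠ 0 := Complex.ofReal_ne_zero.mpr hD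
  have hWC : (Wr : ℂ) ≠ 0 := Complex.ofReal_ne_zero.mpr hW
  push_cast
  field_simp
  ring

lemma cd_WfC {n : WithTop ℕ∞} : ContDiff ℝ n (fun q : ℝ×ℝ×ℝ => Complex.ofReal (Wf M a q)) := by
  apply Complex.ofRealCLM.contDiff.comp
  simp only [Wf, Sig]
  have hcos : ContDiff ℝ n (fun q : ℝ×ℝ×ℝ => Real.cos q.2.2) := Real.contDiff_cos.comp cd_th
  have hsin : ContDiff ℝ n (fun q : ℝ×ℝ×ℝ => Real.sin q.2.2) := Real.contDiff_sin.comp cd_th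
  exact (((cd_r.pow 2).add contDiff_const).mul ((cd_r.pow 2).add
      (contDiff_const.mul (hcos.pow 2)))).add
    ((contDiff_const.mul cd_r).mul (hsin.pow 2))

lemma cd_coefN {n : WithTop ℕ∞} (hM : 0 < M) (ha : 0 ≤ a) (haM : a ≤ M) :
    ContDiffOn ℝ n (fun q : ℝ×ℝ×ℝ =>
      Complex.ofReal (Del M a q.2.1 / Wf M a q)) (OmegaR M a) := by
  have h : (fun q : ℝ×ℝ×ℝ => Complex.ofReal (Del M a q.2.1 / Wf M a q))
      = fun q => Complex.ofReal (Del M a q.2.1) * (Complex.ofReal (Wf M a q))⁻¹ := by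
    funext q
    rw [Complex.ofReal_div, div_eq_mul_inv]
  rw [h]
  exact (cd_DelC M a).contDiffOn.mul (cd_WfC.contDiffOn.inv
    (fun q hq => Complex.ofReal_ne_zero.mpr (Wf_pos hM ha hq).ne'))

lemma cd_Qc_u {u : F3} (hu : ContDiffOn ℝ 4 u (OmegaR M a)) :
    ContDiffOn ℝ 2 (Qc a m u) (OmegaR M a) := by
  have hΩ := isOpen_OmegaR M a
  have hs : ∀ q ∈ OmegaR M a, Real.sin q.2.2 ≠ 0 := fun q hq => (sinp_pos hq).ne'
  have hT2' : ContDiffOn ℝ 2 (dT (dT u)) (OmegaR M a) :=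
    cd_dT hΩ (cd_dT hΩ hu (by norm_num) : ContDiffOn ℝ 3 (dT u) (OmegaR M a)) (by norm_num)
  have hT1' : ContDiffOn ℝ 2 (dT u) (OmegaR M a) := cd_dT hΩ hu (by norm_num)
  rw [Qc_split a m u]
  exact ((cd_coefB hΩ hs).mul (cd_Bop hΩ hu (by norm_num))).add
    (((cd_coefT2 a).contDiffOn.mul hT2').add
      ((contDiff_const.contDiffOn.mul hT1').add
        ((cd_coefM2 m hΩ hs).mul (hu.of_le (by norm_num)))))

lemma cd_Pc_u {u : F3} (hM : 0 < M) (ha : 0 ≤ a) (haM : a ≤ M)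
    (hu : ContDiffOn ℝ 4 u (OmegaR M a)) :
    ContDiffOn ℝ 2 (Pc M a m u) (OmegaR M a) := by
  have hΩ := isOpen_OmegaR M a
  have hd : ∀ q ∈ OmegaR M a, Del M a q.2.1 ≠ 0 := fun q hq => (Del_pos hM ha haM hq).ne'
  have hT2' : ContDiffOn ℝ 2 (dT (dT u)) (OmegaR M a) :=
    cd_dT hΩ (cd_dT hΩ hu (by norm_num) : ContDiffOn ℝ 3 (dT u) (OmegaR M a)) (by norm_num)
  have hT1' : ContDiffOn ℝ 2 (dT u) (OmegaR M a) := cd_dT hΩ hu (by norm_num)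
  have hsplitP : Pc M a m u = fun q : ℝ×ℝ×ℝ =>
      (-1 : ℂ) * Aop M a u q
      + (Complex.ofReal ((q.2.1 ^ 2 + a ^ 2) ^ 2 / Del M a q.2.1) * dT (dT u) q
      + ((2 * Complex.I * (m:ℂ) * (a:ℂ) * Complex.ofReal (q.2.1 ^ 2 + a ^ 2)
          / Complex.ofReal (Del M a q.2.1)) * dT u q
      + (-((m:ℂ)^2 * Complex.ofReal (a ^ 2 / Del M a q.2.1))) * u q)) := by
    funext q
    simp only [Pc]
    ring
  rw [hsplitP]
  exact (contDiff_const.contDiffOn.mul (cd_Aop M a hΩ hu (by norm_num))).add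
    (((cd_coefP2 M a hΩ hd).mul hT2').add
      (((cd_coefP3 M a m hΩ hd).mul hT1').add
        ((cd_coefP4 M a m hΩ hd).mul (hu.of_le (by norm_num)))))

end KerrCommMain
/-- `S` commutes with the normalized wave operator on `C⁴` functions. -/
theorem Sop_commutes_Nbox (M a : ℝ) (m : ℤ) (hM : 0 < M) (ha : 0 ≤ a) (haM : a ≤ M)
    (u : F3) (hu : ContDiffOn ℝ 4 u (OmegaR M a)) :
    ∀ p ∈ OmegaR M a,
      Nbox M a m (Sop M a m u) p = Sop M a m (Nbox M a m u) p := by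
  intro p hp
  have hΩ := isOpen_OmegaR M a
  have hs : ∀ q ∈ OmegaR M a, Real.sin q.2.2 ≠ 0 := fun q hq => (sinp_pos hq).ne'
  have hd : ∀ q ∈ OmegaR M a, Del M a q.2.1 ≠ 0 := fun q hq => (Del_pos hM ha haM hq).ne'
  have hQu : ContDiffOn ℝ 2 (Qc a m u) (OmegaR M a) := cd_Qc_u hu
  have hPu : ContDiffOn ℝ 2 (Pc M a m u) (OmegaR M a) := cd_Pc_u hM ha haM hu
  have hNu : ContDiffOn ℝ 2 (Nbox M a m u) (OmegaR M a) :=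
    (((cd_coefN hM ha haM).mul (hPu.add hQu)).congr
      (fun q hq => nbox_eq hM ha haM u hq))
  have hS4 : ContDiffOn ℝ 2 (fun q : ℝ×ℝ×ℝ =>
      Complex.ofReal (a ^ 2 * Real.sin q.2.2 ^ 2) * Nbox M a m u q) (OmegaR M a) :=
    (cd_ofReal (contDiff_const.mul ((Real.contDiff_sin.comp cd_th).pow 2)).contDiffOn).mul hNu
  have hS5 : ContDiffOn ℝ 2 (fun q : ℝ×ℝ×ℝ =>
      Complex.ofReal ((q.2.1 ^ 2 + a ^ 2) ^ 2 / Del M a q.2.1) * Nbox M a m u q)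
      (OmegaR M a) := (cd_coefP2 M a hΩ hd).mul hNu
  have hS6 : ContDiffOn ℝ 2 (fun q : ℝ×ℝ×ℝ => (-1 : ℂ) * Pc M a m u q) (OmegaR M a) :=
    contDiff_const.contDiffOn.mul hPu
  have eqI3 : Set.EqOn (Sop M a m u) (fun q : ℝ×ℝ×ℝ =>
      Complex.ofReal (a ^ 2 * Real.sin q.2.2 ^ 2) * Nbox M a m u q + Qc a m u q)
      (OmegaR M a) := fun q hq => I3_eq hM ha haM u hq
  have eqI4 : Set.EqOn (Sop M a m u) (fun q : ℝ×ℝ×ℝ =>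
      Complex.ofReal ((q.2.1 ^ 2 + a ^ 2) ^ 2 / Del M a q.2.1) * Nbox M a m u q
        + (-1 : ℂ) * Pc M a m u q) (OmegaR M a) := fun q hq => I4_eq hM ha haM u hq
  have esm1 : Pc M a m (fun q : ℝ×ℝ×ℝ =>
      Complex.ofReal (a ^ 2 * Real.sin q.2.2 ^ 2) * Nbox M a m u q) p
      = Complex.ofReal (a ^ 2 * Real.sin p.2.2 ^ 2) * Pc M a m (Nbox M a m u) p :=
    Pc_smulTh M a m (fun x => Complex.ofReal (a ^ 2 * Real.sin x ^ 2)) (Nbox M a m u) p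
  have esm2 : Qc a m (fun q : ℝ×ℝ×ℝ =>
      Complex.ofReal ((q.2.1 ^ 2 + a ^ 2) ^ 2 / Del M a q.2.1) * Nbox M a m u q) p
      = Complex.ofReal ((p.2.1 ^ 2 + a ^ 2) ^ 2 / Del M a p.2.1) * Qc a m (Nbox M a m u) p :=
    Qc_smulR a m (fun x => Complex.ofReal ((x ^ 2 + a ^ 2) ^ 2 / Del M a x)) (Nbox M a m u) p
  have esm3 : Qc a m (fun q : ℝ×ℝ×ℝ => (-1 : ℂ) * Pc M a m u q) p
      = (-1 : ℂ) * Qc a m (Pc M a m u) p :=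
    Qc_smulR a m (fun _ => (-1 : ℂ)) (Pc M a m u) p
  have eP : Pc M a m (Sop M a m u) p
      = Complex.ofReal (a ^ 2 * Real.sin p.2.2 ^ 2) * Pc M a m (Nbox M a m u) p
        + Pc M a m (Qc a m u) p := by
    rw [Pc_congr M a m hΩ eqI3 hp, Pc_add M a m hΩ hS4 hQu hp, esm1]
  have eQ : Qc a m (Sop M a m u) p
      = Complex.ofReal ((p.2.1 ^ 2 + a ^ 2) ^ 2 / Del M a p.2.1) * Qc a m (Nbox M a m u) p
        + (-1 : ℂ) * Qc a m (Pc M a m u) p := by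
    rw [Qc_congr a m hΩ eqI4 hp, Qc_add a m hΩ hS5 hS6 hp, esm2, esm3]
  have ePQ : Pc M a m (Qc a m u) p = Qc a m (Pc M a m u) p := PQ_comm M a m hΩ hs hd hu hp
  rw [nbox_eq hM ha haM (Sop M a m u) hp, eP, eQ, ePQ,
    s_eq hM ha haM (Nbox M a m u) hp]
  exact final_scalar (Del M a p.2.1) (Wf M a p) (a ^ 2 * Real.sin p.2.2 ^ 2)
    ((p.2.1 ^ 2 + a ^ 2) ^ 2) (Pc M a m (Nbox M a m u) p) (Qc a m (Nbox M a m u) p)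
    (Qc a m (Pc M a m u) p) (Del_pos hM ha haM hp).ne' (Wf_pos hM ha hp).ne'
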